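/- Define, for θ > 0, z̃₂(θ) = 6(sinh 2θ − 2θ)²/(cosh 2θ − 1)³, w̃₀(θ) = (sinh 2θ − 2θ)(sinh 2θ)/(cosh 2θ − 1)², and T(θ) = (sinh 2θ − 2θ)/2. Then for all θ > 0: T(θ)·z̃₂′(θ) = (cosh 2θ − 1)·(2z̃₂(θ) − 3z̃₂(θ)w̃₀(θ)) and T(θ)·w̃₀′(θ) = (cosh 2θ − 1)·(−(1/6)z̃₂(θ) + w̃₀(θ) − w̃₀(θ)²). Equivalently, since T′ = cosh 2θ − 1, the curve (z̃₂, w̃₀) reparametrized by τ = ln T(θ) is a solution of the order n = 1 STV ODE dz₂/dτ = 2z₂ − 3z₂w₀, dw₀/dτ = −(1/6)z₂ + w₀ − w₀². -/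

import Mathlib

open Real Set Filter

/-- Leading-order density coefficient of the pressureless `k = −1` Friedmann spacetime. -/
noncomputable def z2F (θ : ℝ) : ℝ :=
  6 * (Real.sinh (2 * θ) - 2 * θ) ^ 2 / (Real.cosh (2 * θ) - 1) ^ 3

/-- Leading-order velocity coefficient of the pressureless `k = −1` Friedmann spacetime. -/
noncomputable def w0F (θ : ℝ) : ℝ :=
  (Real.sinh (2 * θ) - 2 * θ) * Real.sinh (2 * θ) / (Real.cosh (2 * θ) - 1) ^ 2

/-- `T θ = (sinh 2θ − 2θ)/2`. -/
noncomputable def T (θ : ℝ) : ℝ := (Real.sinh (2 * θ) - 2 * θ) / 2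

/-! With `s = sinh 2θ`, `c = cosh 2θ` and `D = c − 1`, both coefficients are rational in `T`, `s`
and `D`: `z̃₂ = 24 T² / D³` and `w̃₀ = 2 T s / D²`. Since `T' = D`, `D' = 2s` and `s' = 2c`, the two
equations reduce to identities of rational functions, the second one after using `s² = c² − 1`. -/

lemma hasDerivAt_sinh_two_mul (θ : ℝ) :
    HasDerivAt (fun x => Real.sinh (2 * x)) (2 * Real.cosh (2 * θ)) θ :=
  ((Real.hasDerivAt_sinh (2 * θ)).comp θ ((hasDerivAt_id θ).const_mul 2)).congr_deriv (by ring)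

lemma hasDerivAt_cosh_two_mul_sub_one (θ : ℝ) :
    HasDerivAt (fun x => Real.cosh (2 * x) - 1) (2 * Real.sinh (2 * θ)) θ :=
  (((Real.hasDerivAt_cosh (2 * θ)).comp θ ((hasDerivAt_id θ).const_mul 2)).sub_const 1).congr_deriv
    (by ring)

lemma hasDerivAt_T (θ : ℝ) : HasDerivAt T (Real.cosh (2 * θ) - 1) θ :=
  (((hasDerivAt_sinh_two_mul θ).sub ((hasDerivAt_id θ).const_mul 2)).div_const 2).congr_deriv
    (by ring)

lemma cosh_two_mul_sub_one_ne_zero {θ : ℝ} (hθ : θ ≠ 0) : Real.cosh (2 * θ) - 1 ≠ 0 :=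
  (sub_pos.2 (Real.one_lt_cosh.2 (mul_ne_zero two_ne_zero hθ))).ne'

lemma z2F_eq : z2F = fun θ => 24 * T θ ^ 2 / (Real.cosh (2 * θ) - 1) ^ 3 := by
  ext θ; simp only [z2F, T]; ring

lemma w0F_eq : w0F = fun θ => 2 * T θ * Real.sinh (2 * θ) / (Real.cosh (2 * θ) - 1) ^ 2 := by
  ext θ; simp only [w0F, T]; ring

lemma hasDerivAt_z2F {θ : ℝ} (hθ : θ ≠ 0) :
    HasDerivAt z2F (48 * T θ / (Real.cosh (2 * θ) - 1) ^ 2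
      - 144 * T θ ^ 2 * Real.sinh (2 * θ) / (Real.cosh (2 * θ) - 1) ^ 4) θ := by
  have hD := cosh_two_mul_sub_one_ne_zero hθ
  rw [z2F_eq]
  refine ((((hasDerivAt_T θ).pow 2).const_mul 24).div
    ((hasDerivAt_cosh_two_mul_sub_one θ).pow 3) (pow_ne_zero 3 hD)).congr_deriv ?_
  simp only [Pi.pow_apply]
  field_simp
  ring

lemma hasDerivAt_w0F {θ : ℝ} (hθ : θ ≠ 0) :
    HasDerivAt w0F (2 * Real.sinh (2 * θ) / (Real.cosh (2 * θ) - 1)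
      + 4 * T θ * Real.cosh (2 * θ) / (Real.cosh (2 * θ) - 1) ^ 2
      - 8 * T θ * Real.sinh (2 * θ) ^ 2 / (Real.cosh (2 * θ) - 1) ^ 3) θ := by
  have hD := cosh_two_mul_sub_one_ne_zero hθ
  rw [w0F_eq]
  refine ((((hasDerivAt_T θ).const_mul 2).mul (hasDerivAt_sinh_two_mul θ)).div
    ((hasDerivAt_cosh_two_mul_sub_one θ).pow 2) (pow_ne_zero 2 hD)).congr_deriv ?_
  simp only [Pi.pow_apply, Pi.mul_apply]
  field_simp
  ring

/-- The `k = −1` Friedmann curve solves the order `n = 1` STV ODE (in `τ = ln T θ`). -/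
theorem k_neg_orbit_solves_STV_ODE_order_one (θ : ℝ) (hθ : 0 < θ) :
    T θ * deriv z2F θ =
      (Real.cosh (2 * θ) - 1) * (2 * z2F θ - 3 * z2F θ * w0F θ) ∧
    T θ * deriv w0F θ =
      (Real.cosh (2 * θ) - 1) * (-(1 / 6) * z2F θ + w0F θ - (w0F θ) ^ 2) := by
  have hD := cosh_two_mul_sub_one_ne_zero hθ.ne'
  rw [(hasDerivAt_z2F hθ.ne').deriv, (hasDerivAt_w0F hθ.ne').deriv, z2F_eq, w0F_eq]
  constructor
  · field_simp
    ring
  · field_simp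
    linear_combination (24 * T θ ^ 2) * Real.cosh_sq (2 * θ)
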